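/- For skew polynomials f, g over F_{q^m} with automorphism σ, and elements a, b in F_{q^m}, the generalized operator evaluation of the product satisfies (f·g)(b)_a = f(g(b)_a)_a, where f(b)_a = Σ_i f_i σ^i(b) N_i(a) and N_i(a) = σ^{i-1}(a)···σ(a)a. -/

import Mathlib

/-! Operator evaluation is additive and the skew product is the sum of the monomials
`f_i σ^i(g_j) x^(i+j)`, while `σ^i` is additive on `g(b)_a = Σ_j g_j σ^j(b) N_j(a)`. Comparing
term by term, the left side contributes
`f_i σ^i(g_j) σ^(i+j)(b) N_(i+j)(a)` and the right side `f_i σ^i(g_j σ^j(b) N_j(a)) N_i(a)`;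
they agree because `σ^i` is multiplicative and `N` satisfies the cocycle identity
`N_(i+j)(a) = σ^i(N_j(a)) N_i(a)`. -/

open Polynomial Finset

noncomputable section

variable {F : Type*} [Field F]

/-- Generalized power `N_i(a) = σ^{i-1}(a)⋯σ(a)a`, with `N_0(a) = 1`. -/
def genNorm (σ : F → F) (a : F) : ℕ → F
  | 0 => 1
  | i + 1 => σ^[i] a * genNorm σ a i

/-- Generalized operator evaluation `f(b)_a = Σ_i f_i σ^i(b) N_i(a)`. -/
def opEval (σ : F → F) (f : Polynomial F) (a b : F) : F :=
  ∑ i ∈ f.support, f.coeff i * σ^[i] b * genNorm σ a i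

/-- Skew polynomial multiplication induced by the rule `x · a = σ(a) · x`. -/
def skewMul (σ : F → F) (f g : Polynomial F) : Polynomial F :=
  ∑ i ∈ f.support, ∑ j ∈ g.support, C (f.coeff i * σ^[i] (g.coeff j)) * X ^ (i + j)

theorem opEval_add (σ : F → F) (f g : F[X]) (a b : F) :
    opEval σ (f + g) a b = opEval σ f a b + opEval σ g a b :=
  sum_add_index f g (fun i c => c * σ^[i] b * genNorm σ a i) (fun _ => by simp)
    (fun _ _ _ => by ring)

theorem opEval_sum (σ : F → F) {ι : Type*} (s : Finset ι) (p : ι → F[X]) (a b : F) :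
    opEval σ (∑ i ∈ s, p i) a b = ∑ i ∈ s, opEval σ (p i) a b :=
  map_sum (AddMonoidHom.mk' (opEval σ · a b) (opEval_add σ · · a b)) p s

theorem opEval_C_mul_X_pow (σ : F → F) (c : F) (n : ℕ) (a b : F) :
    opEval σ (C c * X ^ n) a b = c * σ^[n] b * genNorm σ a n := by
  rw [C_mul_X_pow_eq_monomial]
  by_cases hc : c = 0
  · simp [opEval, hc]
  · simp [opEval, support_monomial n hc]

theorem genNorm_add {G : Type*} [FunLike G F F] [MonoidHomClass G F F] (σ : G) (a : F)
    (i j : ℕ) : genNorm σ a (i + j) = σ^[i] (genNorm σ a j) * genNorm σ a i := by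
  induction j with
  | zero => simp [genNorm]
  | succ j ih =>
    rw [← add_assoc, genNorm, genNorm, ih, iterate_map_mul, ← Function.iterate_add_apply]
    ring

theorem opEval_skewMul_general (σ : F ≃+* F) (f g : Polynomial F) (a b : F) :
    opEval ⇑σ (skewMul ⇑σ f g) a b = opEval ⇑σ f a (opEval ⇑σ g a b) := by
  simp only [skewMul, opEval_sum, opEval_C_mul_X_pow]
  refine sum_congr rfl fun i _ => ?_
  rw [opEval, ← RingAut.coe_pow, map_sum, mul_sum, sum_mul]
  refine sum_congr rfl fun j _ => ?_
  rw [genNorm_add, RingAut.coe_pow, Function.iterate_add_apply, iterate_map_mul, iterate_map_mul]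
  ring

/-- Product rule for generalized operator evaluation:
`(f·g)(b)_a = f(g(b)_a)_a`. -/
theorem opEval_skewMul [Fintype F] (σ : F ≃+* F) (f g : Polynomial F) (a b : F) :
    opEval ⇑σ (skewMul ⇑σ f g) a b = opEval ⇑σ f a (opEval ⇑σ g a b) :=
  opEval_skewMul_general σ f g a b
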